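/- For every natural number n and every α ∈ [0, π/6], define Φ_n(α) = ((√3/2)·cos α + (1/2)·sin α)·((√3/2)·sin α − (1/2)·cos α)^{2n+1} + ((√3/2)·cos α − (1/2)·sin α)·((√3/2)·sin α + (1/2)·cos α)^{2n+1} − sin α·(cos α)^{2n+1}. Then: Φ_n(α) = 0 for all α ∈ [0, π/6] when n = 0 or n = 1; Φ_n(0) = Φ_n(π/6) = 0 for every n ≥ 2; and Φ_n(α) < 0 for every α ∈ (0, π/6) and every n ≥ 2. -/

import Mathlib

open Real Set

/-- The expression Φ_n(α) from Lemma 4.1. -/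
noncomputable def Phi (n : ℕ) (α : ℝ) : ℝ :=
  (Real.sqrt 3 / 2 * Real.cos α + 1/2 * Real.sin α) *
      (Real.sqrt 3 / 2 * Real.sin α - 1/2 * Real.cos α) ^ (2*n+1)
    + (Real.sqrt 3 / 2 * Real.cos α - 1/2 * Real.sin α) *
      (Real.sqrt 3 / 2 * Real.sin α + 1/2 * Real.cos α) ^ (2*n+1)
    - Real.sin α * (Real.cos α) ^ (2*n+1)

/-!
With p = sin(π/6 - α) and v = sin(π/6 + α) one has p + v = cos α and v - p = √3 sin α, and
√3 Φ_n(α) becomes the binary form Ψ_m(p, v) = (2p + v)v^m - (p + 2v)p^m - (v - p)(p + v)^m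
with m = 2n + 1. It vanishes on the lines p = 0 and p = v, and identically for m = 1, 3.
The recursion Ψ_{m+1} = p Ψ_m - (v - p)(v(p + v)^m - (2p + v)v^m), whose last factor is
positive for m ≥ 2 and 0 < p < v, then forces Ψ_m < 0 for m ≥ 4 on the sector 0 < p < v,
which is the image of 0 < α < π/6.
-/

def Psi {R : Type*} [CommRing R] (m : ℕ) (p v : R) : R :=
  (2 * p + v) * v ^ m - (p + 2 * v) * p ^ m - (v - p) * (p + v) ^ m

section Algebra

variable {R : Type*} [CommRing R] (p v : R)

theorem Psi_one : Psi 1 p v = 0 := by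
  unfold Psi; ring

theorem Psi_three : Psi 3 p v = 0 := by
  unfold Psi; ring

theorem Psi_self (m : ℕ) : Psi m v v = 0 := by
  unfold Psi; ring

theorem Psi_zero_left {m : ℕ} (hm : m ≠ 0) : Psi m 0 v = 0 := by
  unfold Psi; simp only [zero_pow hm]; ring

theorem Psi_succ (m : ℕ) :
    Psi (m + 1) p v = p * Psi m p v - (v - p) * (v * (p + v) ^ m - (2 * p + v) * v ^ m) := by
  unfold Psi; ring

end Algebra

section Order

variable {R : Type*} [CommRing R] [LinearOrder R] [IsStrictOrderedRing R] {p v : R}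

theorem mul_pow_lt_mul_add_pow (hp : 0 < p) (hv : 0 < v) (k : ℕ) :
    (2 * p + v) * v ^ (k + 2) < v * (p + v) ^ (k + 2) :=
  calc (2 * p + v) * v ^ (k + 2) = v ^ k * (v * (2 * p * v + v ^ 2)) := by ring
    _ < v ^ k * (v * (p + v) ^ 2) := by gcongr; nlinarith
    _ ≤ (p + v) ^ k * (v * (p + v) ^ 2) := by gcongr; linarith
    _ = v * (p + v) ^ (k + 2) := by ring

theorem Psi_succ_neg (hp : 0 < p) (hpv : p < v) {m : ℕ} (hm : 2 ≤ m) (h : Psi m p v ≤ 0) :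
    Psi (m + 1) p v < 0 := by
  obtain ⟨k, rfl⟩ := Nat.exists_eq_add_of_le' hm
  have hgap := mul_pow_lt_mul_add_pow hp (hp.trans hpv) k
  rw [Psi_succ]
  nlinarith [mul_pos (sub_pos.2 hpv) (sub_pos.2 hgap)]

theorem Psi_nonpos (hp : 0 < p) (hpv : p < v) {m : ℕ} (hm : 3 ≤ m) : Psi m p v ≤ 0 := by
  induction m, hm using Nat.le_induction with
  | base => exact (Psi_three p v).le
  | succ m hm ih => exact (Psi_succ_neg hp hpv (by omega) ih).le

theorem Psi_neg (hp : 0 < p) (hpv : p < v) {m : ℕ} (hm : 4 ≤ m) : Psi m p v < 0 := by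
  obtain ⟨k, rfl⟩ := Nat.exists_eq_add_of_le' hm
  exact Psi_succ_neg hp hpv (by omega) (Psi_nonpos hp hpv (by omega))

end Order

theorem Phi_eq_Psi_div (n : ℕ) (α : ℝ) :
    Phi n α = Psi (2 * n + 1) (sin (π / 6 - α)) (sin (π / 6 + α)) / √3 := by
  have h3 : √3 * √3 = 3 := mul_self_sqrt (by norm_num)
  rw [eq_div_iff (by positivity), sin_sub, sin_add, sin_pi_div_six, cos_pi_div_six]
  have hneg : √3 / 2 * sin α - 1 / 2 * cos α = -(1 / 2 * cos α - √3 / 2 * sin α) := by ring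
  have hsum : 1 / 2 * cos α - √3 / 2 * sin α + (1 / 2 * cos α + √3 / 2 * sin α) = cos α := by
    ring
  unfold Phi Psi
  rw [hneg, Odd.neg_pow ⟨n, rfl⟩, hsum]
  linear_combination (cos α / 2 * ((1 / 2 * cos α + √3 / 2 * sin α) ^ (2 * n + 1)
    - (1 / 2 * cos α - √3 / 2 * sin α) ^ (2 * n + 1))) * h3

theorem stmt9 :
    (∀ n : ℕ, n = 0 ∨ n = 1 → ∀ α ∈ Set.Icc (0:ℝ) (Real.pi/6), Phi n α = 0) ∧
    (∀ n : ℕ, 2 ≤ n → Phi n 0 = 0 ∧ Phi n (Real.pi/6) = 0) ∧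
    (∀ n : ℕ, 2 ≤ n → ∀ α ∈ Set.Ioo (0:ℝ) (Real.pi/6), Phi n α < 0) := by
  refine ⟨?_, fun n _ => ⟨?_, ?_⟩, ?_⟩
  · rintro n (rfl | rfl) α -
    · rw [Phi_eq_Psi_div, Psi_one, zero_div]
    · rw [Phi_eq_Psi_div, Psi_three, zero_div]
  · rw [Phi_eq_Psi_div, sub_zero, add_zero, Psi_self, zero_div]
  · rw [Phi_eq_Psi_div, sub_self, sin_zero, Psi_zero_left _ (by omega), zero_div]
  · rintro n hn α ⟨hα0, hα6⟩
    have hpos : 0 < sin (π / 6 - α) := sin_pos_of_pos_of_lt_pi (by linarith) (by linarith)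
    have hlt : sin (π / 6 - α) < sin (π / 6 + α) :=
      sin_lt_sin_of_lt_of_le_pi_div_two (by linarith) (by linarith) (by linarith)
    rw [Phi_eq_Psi_div]
    exact div_neg_of_neg_of_pos (Psi_neg hpos hlt (by omega)) (by positivity)
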